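/- Assume q ≥ 1, each D i j is a finite nonempty subset of ℝ, and O ∩ 𝒟 ≠ ∅. Define columns c j : Fin p → ℝ by downward recursion on j ∈ Fin q: c (q−1) is the lexicographic minimum of { v : Fin p → ℝ | ∀ i, v i ∈ D i (q−1) }, and for j < q−1, c j is the lexicographic minimum of { v : Fin p → ℝ | (∀ i, v i ∈ D i j) ∧ v ⪰ c (j+1) }. Then each set occurring in this recursion is nonempty (so c is well defined), the matrix C given by C i j = c j i belongs to O ∩ 𝒟, and C is the minimum of O ∩ 𝒟 with respect to the lexicographic order of row-wise vectorizations, i.e., vec(C) ⪯ vec(X) for every X ∈ O ∩ 𝒟. -/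
import Mathlib


/-- Lexicographic order `u ⪰ v` on `Fin p → ℝ`. -/
def lexGe {p : ℕ} (u v : Fin p → ℝ) : Prop :=
  u = v ∨ ∃ k : Fin p, (∀ i : Fin p, i < k → u i = v i) ∧ v k < u k

/-- The set of `p × q` matrices whose columns are lexicographically
non-increasing. -/
def Omat (p q : ℕ) : Set (Fin p → Fin q → ℝ) :=
  {X | ∀ j j' : Fin q, j ≤ j' → lexGe (fun i => X i j) (fun i => X i j')}

/-- The set of matrices respecting the entrywise domains `D`. -/
def Dmat {p q : ℕ} (D : Fin p → Fin q → Set ℝ) : Set (Fin p → Fin q → ℝ) :=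
  {X | ∀ i j, X i j ∈ D i j}

/-- Row-wise vectorization: `vec X (q·i + j) = X i j`. -/
def vec {p q : ℕ} (X : Fin p → Fin q → ℝ) : Fin (p * q) → ℝ :=
  fun k => X (finProdFinEquiv.symm k).1 (finProdFinEquiv.symm k).2

instance (priority := 10000) (p : ℕ) : WellFoundedLT (Fin p) := Finite.to_wellFoundedLT

lemma lexGe_iff {p : ℕ} (u v : Fin p → ℝ) : lexGe u v ↔ toLex v ≤ toLex u := by
  rw [le_iff_lt_or_eq]
  constructor
  · rintro (rfl | ⟨k, h1, h2⟩)
    · exact Or.inr rfl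
    · exact Or.inl ⟨k, fun j hj => (h1 j hj).symm, h2⟩
  · rintro (⟨k, h1, h2⟩ | h)
    · exact Or.inr ⟨k, fun j hj => (h1 j hj).symm, h2⟩
    · exact Or.inl (congrArg ofLex h).symm

lemma lexGe_refl {p : ℕ} (u : Fin p → ℝ) : lexGe u u := Or.inl rfl

lemma lexGe_trans {p : ℕ} {u v w : Fin p → ℝ} (h1 : lexGe u v) (h2 : lexGe v w) :
    lexGe u w := by
  rw [lexGe_iff] at *
  exact le_trans h2 h1

lemma exists_lexMin {p : ℕ} (S : Set (Fin p → ℝ)) (hfin : S.Finite) (hne : S.Nonempty) :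
    ∃ c ∈ S, ∀ u ∈ S, lexGe u c := by
  obtain ⟨c, hc, hmin⟩ := Set.exists_min_image S (fun v => (toLex v : Lex (Fin p → ℝ))) hfin hne
  exact ⟨c, hc, fun u hu => (lexGe_iff u c).2 (hmin u hu)⟩

lemma finite_col {p : ℕ} (T : Fin p → Set ℝ) (hT : ∀ i, (T i).Finite)
    (S : Set (Fin p → ℝ)) (hS : ∀ v ∈ S, ∀ i, v i ∈ T i) : S.Finite :=
  (Set.Finite.pi (fun i => hT i)).subset fun v hv => Set.mem_univ_pi.2 (hS v hv)

lemma lexGe_first_diff {p : ℕ} {u v : Fin p → ℝ} (h : lexGe u v) (i : Fin p)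
    (he : ∀ i' : Fin p, i' < i → u i' = v i') (hne : u i ≠ v i) : v i < u i := by
  rcases h with rfl | ⟨k, h1, h2⟩
  · exact absurd rfl hne
  · rcases lt_trichotomy k i with hki | rfl | hik
    · exact absurd (he k hki) (ne_of_gt h2)
    · exact h2
    · exact absurd (h1 i hik) hne

noncomputable def cseq (p q : ℕ) (hq : 0 < q) (D : Fin p → Fin q → Set ℝ) :
    ℕ → (Fin p → ℝ)
  | 0 => Classical.epsilon fun c =>
      (∀ i, c i ∈ D i ⟨q - 1, by omega⟩) ∧
      ∀ u : Fin p → ℝ, (∀ i, u i ∈ D i ⟨q - 1, by omega⟩) → lexGe u c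
  | (m + 1) => Classical.epsilon fun c =>
      ((∀ i, c i ∈ D i ⟨q - 1 - (m + 1), by omega⟩) ∧ lexGe c (cseq p q hq D m)) ∧
      ∀ u : Fin p → ℝ,
        ((∀ i, u i ∈ D i ⟨q - 1 - (m + 1), by omega⟩) ∧ lexGe u (cseq p q hq D m)) →
        lexGe u c

lemma cseq_spec (p q : ℕ) (hq : 0 < q) (D : Fin p → Fin q → Set ℝ)
    (hDfin : ∀ i j, (D i j).Finite) (hDne : ∀ i j, (D i j).Nonempty)
    (hOD : (Omat p q ∩ Dmat D).Nonempty) :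
    ∀ m, m ≤ q - 1 →
      ((∀ i, cseq p q hq D m i ∈ D i ⟨q - 1 - m, by omega⟩) ∧
       (∀ m', m = m' + 1 → lexGe (cseq p q hq D m) (cseq p q hq D m')) ∧
       (∀ u : Fin p → ℝ, (∀ i, u i ∈ D i ⟨q - 1 - m, by omega⟩) →
          (∀ m', m = m' + 1 → lexGe u (cseq p q hq D m')) → lexGe u (cseq p q hq D m))) ∧
      ∀ X ∈ Omat p q ∩ Dmat D,
        lexGe (fun i => X i ⟨q - 1 - m, by omega⟩) (cseq p q hq D m) := by
  intro m
  induction m with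
  | zero =>
    intro _
    have hne : ∃ c : Fin p → ℝ,
        (∀ i, c i ∈ D i ⟨q - 1, by omega⟩) ∧
        ∀ u : Fin p → ℝ, (∀ i, u i ∈ D i ⟨q - 1, by omega⟩) → lexGe u c := by
      obtain ⟨c, hc, hmin⟩ := exists_lexMin {v : Fin p → ℝ | ∀ i, v i ∈ D i ⟨q - 1, by omega⟩}
        (finite_col (fun i => D i ⟨q - 1, by omega⟩) (fun i => hDfin i _) _ (fun v hv => hv))
        ⟨fun i => (hDne i ⟨q - 1, by omega⟩).choose,
          fun i => (hDne i ⟨q - 1, by omega⟩).choose_spec⟩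
      exact ⟨c, hc, fun u hu => hmin u hu⟩
    have hP := Classical.epsilon_spec hne
    rw [show cseq p q hq D 0 = Classical.epsilon _ from rfl]
    refine ⟨⟨hP.1, fun m' h => by omega, fun u hu _ => hP.2 u hu⟩, ?_⟩
    intro X hX
    exact hP.2 _ (fun i => hX.2 i ⟨q - 1, by omega⟩)
  | succ m ih =>
    intro hm1
    obtain ⟨ihQ, ihinv⟩ := ih (by omega)
    have hne : ∃ c : Fin p → ℝ,
        ((∀ i, c i ∈ D i ⟨q - 1 - (m + 1), by omega⟩) ∧ lexGe c (cseq p q hq D m)) ∧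
        ∀ u : Fin p → ℝ,
          ((∀ i, u i ∈ D i ⟨q - 1 - (m + 1), by omega⟩) ∧ lexGe u (cseq p q hq D m)) →
          lexGe u c := by
      obtain ⟨X, hX⟩ := hOD
      have hXmem : (fun i => X i ⟨q - 1 - (m + 1), by omega⟩) ∈
          {v : Fin p → ℝ | (∀ i, v i ∈ D i ⟨q - 1 - (m + 1), by omega⟩) ∧
            lexGe v (cseq p q hq D m)} := by
        refine ⟨fun i => hX.2 i _, ?_⟩
        have hO := hX.1 ⟨q - 1 - (m + 1), by omega⟩ ⟨q - 1 - m, by omega⟩ (by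
          simp only [Fin.mk_le_mk]; omega)
        exact lexGe_trans hO (ihinv X hX)
      obtain ⟨c, hc, hmin⟩ := exists_lexMin _
        (finite_col (fun i => D i ⟨q - 1 - (m + 1), by omega⟩)
          (fun i => hDfin i _) _ (fun v hv => hv.1)) ⟨_, hXmem⟩
      exact ⟨c, hc, fun u hu => hmin u hu⟩
    have hP := Classical.epsilon_spec hne
    rw [show cseq p q hq D (m + 1) = Classical.epsilon _ from rfl]
    refine ⟨⟨hP.1.1, ?_, ?_⟩, ?_⟩
    · intro m' h
      obtain rfl : m' = m := by omega
      exact hP.1.2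
    · intro u hu hge
      exact hP.2 u ⟨hu, hge m rfl⟩
    · intro X hX
      refine hP.2 _ ⟨fun i => hX.2 i _, ?_⟩
      have hO := hX.1 ⟨q - 1 - (m + 1), by omega⟩ ⟨q - 1 - m, by omega⟩ (by
        simp only [Fin.mk_le_mk]; omega)
      exact lexGe_trans hO (ihinv X hX)
/-- The column-wise downward recursion of orbitopal reduction is well defined
(all the sets appearing in it are nonempty: `c j` is asserted, in particular,
to be a member of the corresponding set), the resulting matrix `C i j = c j i`
lies in `O ∩ 𝒟`, and `C` is the minimum of `O ∩ 𝒟` with respect to the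
lexicographic order of row-wise vectorizations. -/
theorem stmt17 (p q : ℕ) (hq : 1 ≤ q) (D : Fin p → Fin q → Set ℝ)
    (hDfin : ∀ i j, (D i j).Finite) (hDne : ∀ i j, (D i j).Nonempty)
    (hOD : (Omat p q ∩ Dmat D).Nonempty) :
    ∃ c : Fin q → Fin p → ℝ,
      -- `c (q-1)` is the lexicographic minimum of the last column's domain
      (c ⟨q - 1, by omega⟩ ∈
          {v : Fin p → ℝ | ∀ i, v i ∈ D i ⟨q - 1, by omega⟩} ∧
        ∀ u ∈ {v : Fin p → ℝ | ∀ i, v i ∈ D i ⟨q - 1, by omega⟩},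
          lexGe u (c ⟨q - 1, by omega⟩)) ∧
      -- for `j < q - 1`, `c j` is the lexicographic minimum of
      -- `{ v ∈ D^j | v ⪰ c (j+1) }`
      (∀ j : Fin q, ∀ h : (j : ℕ) < q - 1,
        c j ∈ {v : Fin p → ℝ | (∀ i, v i ∈ D i j) ∧
            lexGe v (c ⟨(j : ℕ) + 1, by omega⟩)} ∧
        ∀ u ∈ {v : Fin p → ℝ | (∀ i, v i ∈ D i j) ∧
            lexGe v (c ⟨(j : ℕ) + 1, by omega⟩)}, lexGe u (c j)) ∧
      (fun i j => c j i) ∈ Omat p q ∩ Dmat D ∧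
      ∀ X ∈ Omat p q ∩ Dmat D, lexGe (vec X) (vec fun i j => c j i) := by
  have hq0 : 0 < q := hq
  have spec := cseq_spec p q hq0 D hDfin hDne hOD
  refine ⟨fun j => cseq p q hq0 D (q - 1 - (j : ℕ)), ?_, ?_, ⟨?_, ?_⟩, ?_⟩
  · -- last column
    have e0 : q - 1 - ((⟨q - 1, by omega⟩ : Fin q) : ℕ) = 0 := by simp
    simp only [e0]
    have hP := (spec 0 (by omega)).1
    exact ⟨hP.1, fun u hu => hP.2.2 u hu (fun m' h => by omega)⟩
  · -- earlier columns
    intro j hj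
    have hjq := j.isLt
    set m : ℕ := q - 1 - (j : ℕ) - 1 with hm
    have hcj : q - 1 - (j : ℕ) = m + 1 := by omega
    have hcj1 : q - 1 - ((⟨(j : ℕ) + 1, by omega⟩ : Fin q) : ℕ) = m := by simp; omega
    simp only [hcj, hcj1]
    have hQ := (spec (m + 1) (by omega)).1
    have hidx : (⟨q - 1 - (m + 1), by omega⟩ : Fin q) = j := by
      apply Fin.ext; simp; omega
    rw [hidx] at hQ
    refine ⟨⟨hQ.1, hQ.2.1 m rfl⟩, ?_⟩
    intro u hu
    exact hQ.2.2 u hu.1 (fun m' h => by rw [show m' = m by omega]; exact hu.2)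
  · -- Omat
    have hstep : ∀ a b : ℕ, b ≤ a → a ≤ q - 1 →
        lexGe (cseq p q hq0 D a) (cseq p q hq0 D b) := by
      intro a
      induction a with
      | zero =>
        intro b hb _
        obtain rfl : b = 0 := by omega
        exact lexGe_refl _
      | succ a ih =>
        intro b hb ha
        rcases Nat.eq_or_lt_of_le hb with rfl | hba
        · exact lexGe_refl _
        · exact lexGe_trans ((spec (a + 1) ha).1.2.1 a rfl) (ih b (by omega) (by omega))
    intro j j' hjj'
    exact hstep _ _ (by have := j.isLt; have := j'.isLt; omega) (by omega)
  · -- Dmat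
    intro i j
    have hjq := j.isLt
    have hQ := (spec (q - 1 - (j : ℕ)) (by omega)).1.1 i
    have hidx : (⟨q - 1 - (q - 1 - (j : ℕ)), by omega⟩ : Fin q) = j := by
      apply Fin.ext; simp; omega
    rwa [hidx] at hQ
  · -- minimality for vec
    intro X hX
    have hcol : ∀ j : Fin q, lexGe (fun i => X i j) (cseq p q hq0 D (q - 1 - (j : ℕ))) := by
      intro j
      have hjq := j.isLt
      have h := (spec (q - 1 - (j : ℕ)) (by omega)).2 X hX
      have hidx : (⟨q - 1 - (q - 1 - (j : ℕ)), by omega⟩ : Fin q) = j := by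
        apply Fin.ext; simp; omega
      rwa [hidx] at h
    set C : Fin p → Fin q → ℝ := fun i j => cseq p q hq0 D (q - 1 - (j : ℕ)) i with hC
    by_cases hXC : vec X = vec C
    · exact Or.inl hXC
    · obtain ⟨k0, hk0, hmin⟩ := Set.exists_min_image
        {k : Fin (p * q) | vec X k ≠ vec C k} id (Set.toFinite _)
        (Function.ne_iff.1 hXC)
      set i : Fin p := (finProdFinEquiv.symm k0).1 with hi
      set j : Fin q := (finProdFinEquiv.symm k0).2 with hj
      have hk0eq : finProdFinEquiv (i, j) = k0 := by
        rw [hi, hj]; exact Equiv.apply_symm_apply _ _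
      have hklt : ∀ i' : Fin p, i' < i → finProdFinEquiv (i', j) < k0 := by
        intro i' hii'
        rw [← hk0eq]
        rw [Fin.lt_def]
        show (j : ℕ) + q * (i' : ℕ) < (j : ℕ) + q * (i : ℕ)
        have := mul_lt_mul_of_pos_left (show (i' : ℕ) < (i : ℕ) from hii') hq0
        omega
      have he : ∀ i' : Fin p, i' < i → X i' j = C i' j := by
        intro i' hii'
        have hnot : finProdFinEquiv (i', j) ∉ {k : Fin (p * q) | vec X k ≠ vec C k} := by
          intro hmem
          exact absurd (hmin _ hmem) (not_le.2 (hklt i' hii'))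
        have heq := not_not.1 hnot
        simpa only [vec, Equiv.symm_apply_apply] using heq
      have hne : X i j ≠ C i j := hk0
      have hdiff : C i j < X i j :=
        lexGe_first_diff (hcol j) i (fun i' h => he i' h) hne
      refine Or.inr ⟨k0, ?_, hdiff⟩
      intro k hk
      exact not_not.1 (fun hmem => absurd (hmin k hmem) (not_le.2 hk))
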